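/- Let S be a dense subsemigroup of ((0,∞),+), let α, δ be positive ordinals, and let A be an admissible α×δ matrix. The following are equivalent: (a) whenever T ⊆ S is thick near zero and T is finitely colored, there exists x⃗ ∈ S^δ such that the entries of Ax⃗ are monochromatic; (b) for every minimal left ideal L of O⁺(S), L ∩ I₀(A;S) ≠ ∅; (c) for every left ideal L of O⁺(S), L ∩ I₀(A;S) ≠ ∅. -/

import Mathlib

noncomputable section

/-- Addition of ultrafilters on ℝ: `B ∈ uAdd p q ↔ {x | {y | x + y ∈ B} ∈ q} ∈ p`. -/
def uAdd (p q : Ultrafilter ℝ) : Ultrafilter ℝ :=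
  p.bind fun x => q.map fun y => x + y

/-- `S` is a subsemigroup of `((0,∞),+)`. -/
def IsPosSubsemigroup (S : Set ℝ) : Prop :=
  S.Nonempty ∧ S ⊆ Set.Ioi 0 ∧ ∀ x ∈ S, ∀ y ∈ S, x + y ∈ S

/-- `0` is a limit point of `S`. -/
def DenseNearZero (S : Set ℝ) : Prop := ∀ ε > 0, ∃ x ∈ S, x < ε

/-- the `i`-th entry of `A x⃗`. -/
def mEntry {ι κ : Type} (A : ι → κ → ℚ) (x : κ → ℝ) (i : ι) : ℝ :=
  ∑ᶠ j, (A i j : ℝ) * x j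

/-- admissible matrix: no zero row, finitely many nonzero entries in each row. -/
def Admissible {ι κ : Type} (A : ι → κ → ℚ) : Prop :=
  (∀ i, A i ≠ 0) ∧ ∀ i, (Function.support (A i)).Finite

/-- `A` is image partition regular over `S`. -/
def IPRover {ι κ : Type} (S : Set ℝ) (A : ι → κ → ℚ) : Prop :=
  ∀ (k : ℕ) (c : ℝ → Fin (k + 1)), ∃ x : κ → ℝ, (∀ j, x j ∈ S) ∧
    ∃ m : Fin (k + 1), ∀ i, mEntry A x i ∈ S \ {0} ∧ c (mEntry A x i) = m

/-- `A` is image partition regular near zero over `S`. -/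
def IPRNearZero {ι κ : Type} (S : Set ℝ) (A : ι → κ → ℚ) : Prop :=
  ∀ (k : ℕ) (c : ℝ → Fin (k + 1)), ∀ δ > (0 : ℝ), ∃ x : κ → ℝ, (∀ j, x j ∈ S) ∧
    ∃ m : Fin (k + 1), ∀ i, mEntry A x i ∈ S \ {0} ∧
      mEntry A x i ∈ Set.Ioo 0 δ ∧ c (mEntry A x i) = m

/-- `I(A;S)`. -/
def ISet {ι κ : Type} (S : Set ℝ) (A : ι → κ → ℚ) : Set (Ultrafilter ℝ) :=
  {p | S ∈ p ∧ ∀ P ∈ p, ∃ x : κ → ℝ, (∀ j, x j ∈ S) ∧ ∀ i, mEntry A x i ∈ P}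

/-- `O⁺(S)`. -/
def Oplus (S : Set ℝ) : Set (Ultrafilter ℝ) :=
  {p | ∀ ε > (0 : ℝ), Set.Ioo 0 ε ∩ S ∈ p}

/-- `I₀(A;S)`. -/
def I0Set {ι κ : Type} (S : Set ℝ) (A : ι → κ → ℚ) : Set (Ultrafilter ℝ) :=
  {p | S ∈ p ∧ ∀ P ∈ p, ∀ ε > (0 : ℝ), ∃ x : κ → ℝ, (∀ j, x j ∈ S) ∧
      ∀ i, mEntry A x i ∈ P ∩ Set.Ioo 0 ε}

/-- multiplication of an ultrafilter by a real constant. -/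
def mulU (c : ℝ) (p : Ultrafilter ℝ) : Ultrafilter ℝ := p.map fun x => c * x

/-- `q·p = q-lim_{n} (n·p)` for `q ∈ βℕ`, `p ∈ βℝ`. -/
def actU (q : Ultrafilter ℕ) (p : Ultrafilter ℝ) : Ultrafilter ℝ :=
  q.bind fun n => p.map fun x => (n : ℝ) * x

/-- `I` is a two-sided ideal of `T ⊆ βℝ`. -/
def IsIdealIn (T I : Set (Ultrafilter ℝ)) : Prop :=
  I.Nonempty ∧ I ⊆ T ∧ ∀ p ∈ T, ∀ q ∈ I, uAdd p q ∈ I ∧ uAdd q p ∈ I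

/-- the smallest two-sided ideal of `T`. -/
def KK (T : Set (Ultrafilter ℝ)) : Set (Ultrafilter ℝ) :=
  ⋂₀ {I | IsIdealIn T I}

/-- `L` is a left ideal of `T`. -/
def IsLeftIdealIn (T L : Set (Ultrafilter ℝ)) : Prop :=
  L.Nonempty ∧ L ⊆ T ∧ ∀ p ∈ T, ∀ q ∈ L, uAdd p q ∈ L

/-- `L` is a minimal left ideal of `T`. -/
def IsMinLeftIdealIn (T L : Set (Ultrafilter ℝ)) : Prop :=
  IsLeftIdealIn T L ∧ ∀ L', IsLeftIdealIn T L' → L' ⊆ L → L' = L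

/-- `C ⊆ S` is central near zero. -/
def CentralNearZero (S C : Set ℝ) : Prop :=
  ∃ p : Ultrafilter ℝ, p ∈ KK (Oplus S) ∧ uAdd p p = p ∧ C ∈ p

/-- `C` is central* near zero: it belongs to every minimal idempotent of `O⁺(S)`. -/
def CentralStarNearZero (S C : Set ℝ) : Prop :=
  ∀ p : Ultrafilter ℝ, p ∈ KK (Oplus S) → uAdd p p = p → C ∈ p

/-- `C` is IP* near zero: it belongs to every idempotent of `O⁺(S)`. -/
def IPStarNearZero (S C : Set ℝ) : Prop :=
  ∀ p : Ultrafilter ℝ, p ∈ Oplus S → uAdd p p = p → C ∈ p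

/-- `A` is centrally image partition regular near zero over `S`. -/
def CIPRNearZero {ι κ : Type} (S : Set ℝ) (A : ι → κ → ℚ) : Prop :=
  ∀ C : Set ℝ, CentralNearZero S C →
    ∃ x : κ → ℝ, (∀ j, x j ∈ S) ∧ ∀ i, mEntry A x i ∈ C

/-- `T` is thick near zero in `S`. -/
def ThickNearZero (S T : Set ℝ) : Prop :=
  ∃ L : Set (Ultrafilter ℝ), IsLeftIdealIn (Oplus S) L ∧ ∀ p ∈ L, T ∈ p

/-- membership in the class `𝓜₀(S)`. -/
def MemM0 {ι κ : Type} (S : Set ℝ) (A : ι → κ → ℚ) : Prop :=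
  Admissible A ∧ ∀ T : Set ℝ, ThickNearZero S T →
    ∀ (k : ℕ) (c : ℝ → Fin (k + 1)), ∃ x : κ → ℝ, (∀ j, x j ∈ S) ∧
      ∃ m : Fin (k + 1), ∀ i, mEntry A x i ∈ T ∧ c (mEntry A x i) = m

/-- `A` is (finite) image partition regular (over ℕ). -/
def IPRoverNat {u v : ℕ} (A : Fin u → Fin v → ℚ) : Prop :=
  ∀ (k : ℕ) (c : ℕ → Fin (k + 1)), ∃ x : Fin v → ℕ, ∃ m : Fin (k + 1),
    ∀ i, ∃ n : ℕ, 0 < n ∧ (n : ℚ) = ∑ j, A i j * (x j : ℚ) ∧ c n = m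

/-- the compressed form of a finitely supported integer vector: delete the zeros,
then collapse equal consecutive entries. -/
def compress (r : ℕ → ℤ) (hr : (Function.support r).Finite) : List ℤ :=
  ((hr.toFinset.sort (· ≤ ·)).map r).destutter (· ≠ ·)

/-- `M` is the Milliken–Taylor matrix `MT(a⃗)`: its rows are exactly the finitely
supported integer vectors with compressed form `a⃗`. -/
def IsMTMatrix (a : List ℤ) (M : ℕ → ℕ → ℚ) : Prop :=
  (∀ i, ∃ (r : ℕ → ℤ) (hr : (Function.support r).Finite),
      (M i = fun j => (r j : ℚ)) ∧ compress r hr = a) ∧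
  ∀ (r : ℕ → ℤ) (hr : (Function.support r).Finite),
    compress r hr = a → ∃ i, M i = fun j => (r j : ℚ)

/-- the sum `f 0 + (f 1 + (⋯ + f k))` in `(βℝ, +)`. -/
def finSumU : ∀ {k : ℕ}, (Fin (k + 1) → Ultrafilter ℝ) → Ultrafilter ℝ
  | 0, f => f 0
  | _ + 1, f => uAdd (f 0) (finSumU fun i => f i.succ)

end


/-!
For `p ∈ O⁺(S)`, membership in `I₀(A;S)` is the same as membership in `I(A;S)`, since every
`(0,ε) ∩ S` already lies in `p`. If `p ∈ I(A;S)` and `T ∈ p`, then `p` picks one colour class of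
any finite colouring of `T`, and that class contains an image of `A`; as every left ideal contains
a minimal one, (b) gives (c) and then (a). Conversely, if a minimal left ideal `L` missed `I₀(A;S)`,
each `q ∈ L` would contain a set `Q_q` holding no image of `A`. Minimal left ideals are closed, so
by compactness finitely many `Q_q` already meet every member of `L`; their union is thick near zero,
and colouring it by which `Q_q` a point lies in contradicts (a).
-/

open Set Filter Topology

def ThickImagePartitionRegular {ι κ : Type} (S : Set ℝ) (A : ι → κ → ℚ) : Prop :=
  ∀ T : Set ℝ, ThickNearZero S T → ∀ (k : ℕ) (c : ℝ → Fin (k + 1)),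
    ∃ x : κ → ℝ, (∀ j, x j ∈ S) ∧ ∃ m : Fin (k + 1), ∀ i, mEntry A x i ∈ T ∧ c (mEntry A x i) = m

section Oplus

variable {S : Set ℝ}

lemma mem_uAdd {p q : Ultrafilter ℝ} {s : Set ℝ} :
    s ∈ uAdd p q ↔ {x | {y | x + y ∈ s} ∈ q} ∈ p := Iff.rfl

lemma uAdd_assoc (p q r : Ultrafilter ℝ) : uAdd (uAdd p q) r = uAdd p (uAdd q r) := by
  ext s
  simp only [mem_uAdd, mem_ofPred_eq, add_assoc]

lemma continuous_uAdd_right (q : Ultrafilter ℝ) : Continuous (uAdd · q) := by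
  rw [ultrafilterBasis_is_basis.continuous_iff]
  rintro _ ⟨s, rfl⟩
  exact ultrafilter_isOpen_basic {x | {y | x + y ∈ s} ∈ q}

lemma isClosed_oplus (S : Set ℝ) : IsClosed (Oplus S) := by
  have : Oplus S = ⋂ ε > (0 : ℝ), {p : Ultrafilter ℝ | Ioo 0 ε ∩ S ∈ p} := by
    ext p
    simp [Oplus]
  rw [this]
  exact isClosed_biInter fun ε _ => ultrafilter_isClosed_basic _

lemma mem_of_mem_oplus {p : Ultrafilter ℝ} (hp : p ∈ Oplus S) : S ∈ p :=
  mem_of_superset (hp 1 one_pos) inter_subset_right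

lemma oplus_nonempty (hS : IsPosSubsemigroup S) (hd : DenseNearZero S) : (Oplus S).Nonempty := by
  have : (𝓝[>] (0 : ℝ) ⊓ 𝓟 S).NeBot := by
    rw [inf_principal_neBot_iff]
    intro U hU
    obtain ⟨ε, hε, hεU⟩ := (nhdsGT_basis (0 : ℝ)).mem_iff.mp hU
    obtain ⟨x, hxS, hxε⟩ := hd ε hε
    exact ⟨x, hεU ⟨hS.2.1 hxS, hxε⟩, hxS⟩
  exact ⟨Ultrafilter.of (𝓝[>] 0 ⊓ 𝓟 S), fun ε hε => Ultrafilter.of_le _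
    (inter_mem_inf (Ioo_mem_nhdsGT hε) (mem_principal_self S))⟩

lemma uAdd_mem_oplus (hS : IsPosSubsemigroup S) {p q : Ultrafilter ℝ}
    (hp : p ∈ Oplus S) (hq : q ∈ Oplus S) : uAdd p q ∈ Oplus S := by
  intro ε hε
  rw [mem_uAdd]
  refine mem_of_superset (hp ε hε) fun x ⟨⟨hx0, hxε⟩, hxS⟩ => ?_
  refine mem_of_superset (hq (ε - x) (by linarith)) fun y ⟨⟨hy0, hyε⟩, hyS⟩ => ?_
  exact ⟨⟨by positivity, by linarith⟩, hS.2.2 x hxS y hyS⟩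

lemma isClosed_image_uAdd_right (q : Ultrafilter ℝ) : IsClosed ((uAdd · q) '' Oplus S) :=
  ((isClosed_oplus S).isCompact.image (continuous_uAdd_right q)).isClosed

lemma isLeftIdealIn_image_uAdd_right (hS : IsPosSubsemigroup S) (hd : DenseNearZero S)
    {q : Ultrafilter ℝ} (hq : q ∈ Oplus S) : IsLeftIdealIn (Oplus S) ((uAdd · q) '' Oplus S) := by
  refine ⟨(oplus_nonempty hS hd).image _, ?_, ?_⟩
  · rintro _ ⟨p, hp, rfl⟩
    exact uAdd_mem_oplus hS hp hq
  · rintro p hp _ ⟨p', hp', rfl⟩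
    exact ⟨uAdd p p', uAdd_mem_oplus hS hp hp', uAdd_assoc p p' q⟩

lemma IsLeftIdealIn.image_uAdd_right_subset {L : Set (Ultrafilter ℝ)}
    (hL : IsLeftIdealIn (Oplus S) L) {q : Ultrafilter ℝ} (hq : q ∈ L) :
    (uAdd · q) '' Oplus S ⊆ L := by
  rintro _ ⟨p, hp, rfl⟩
  exact hL.2.2 p hp q hq

lemma IsChain.isLeftIdealIn_sInter {c : Set (Set (Ultrafilter ℝ))}
    (hchain : IsChain (· ⊆ ·) c) (hne : c.Nonempty)
    (hc : ∀ L ∈ c, IsLeftIdealIn (Oplus S) L ∧ IsClosed L) : IsLeftIdealIn (Oplus S) (⋂₀ c) := by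
  obtain ⟨L₀, hL₀⟩ := hne
  have : Nonempty c := ⟨⟨L₀, hL₀⟩⟩
  refine ⟨?_, (sInter_subset_of_mem hL₀).trans (hc L₀ hL₀).1.2.1, ?_⟩
  · refine IsCompact.nonempty_sInter_of_directed_nonempty_isCompact_isClosed
      (fun L hL L' hL' => ?_) (fun L hL => (hc L hL).1.1) (fun L hL => (hc L hL).2.isCompact)
      (fun L hL => (hc L hL).2)
    rcases hchain.total hL hL' with h | h
    exacts [⟨L, hL, subset_rfl, h⟩, ⟨L', hL', h, subset_rfl⟩]
  · intro p hp q hq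
    exact mem_sInter.2 fun L hL => (hc L hL).1.2.2 p hp q (mem_sInter.1 hq L hL)

/-- By Zorn's lemma there is a minimal *closed* left ideal inside `L`; it is minimal among all left
ideals because every left ideal `L'` contains the closed left ideal `O⁺(S) + q` for any `q ∈ L'`. -/
lemma exists_isMinLeftIdealIn_subset (hS : IsPosSubsemigroup S) (hd : DenseNearZero S)
    {L : Set (Ultrafilter ℝ)} (hL : IsLeftIdealIn (Oplus S) L) :
    ∃ M, IsMinLeftIdealIn (Oplus S) M ∧ M ⊆ L ∧ IsClosed M := by
  let 𝒮 : Set (Set (Ultrafilter ℝ)) := {M | IsLeftIdealIn (Oplus S) M ∧ IsClosed M ∧ M ⊆ L}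
  have hgen : ∀ {L'}, IsLeftIdealIn (Oplus S) L' → L' ⊆ L → ∃ N ∈ 𝒮, N ⊆ L' := by
    intro L' hL' hL'L
    obtain ⟨q, hq⟩ := hL'.1
    have hN := hL'.image_uAdd_right_subset hq
    exact ⟨_, ⟨isLeftIdealIn_image_uAdd_right hS hd (hL'.2.1 hq), isClosed_image_uAdd_right q,
      hN.trans hL'L⟩, hN⟩
  obtain ⟨N, hN𝒮, -⟩ := hgen hL subset_rfl
  obtain ⟨M, -, hM⟩ := zorn_superset_nonempty 𝒮 (fun c hc𝒮 hchain hne =>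
    ⟨⋂₀ c, ⟨hchain.isLeftIdealIn_sInter hne fun L hL => ⟨(hc𝒮 hL).1, (hc𝒮 hL).2.1⟩,
      isClosed_sInter fun L hL => (hc𝒮 hL).2.1,
      (sInter_subset_of_mem hne.some_mem).trans (hc𝒮 hne.some_mem).2.2⟩,
      fun L hL => sInter_subset_of_mem hL⟩) N hN𝒮
  refine ⟨M, ⟨hM.prop.1, fun L' hL' hL'M => hL'M.antisymm ?_⟩, hM.prop.2.2, hM.prop.2.1⟩
  obtain ⟨N', hN'𝒮, hN'L'⟩ := hgen hL' (hL'M.trans hM.prop.2.2)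
  exact (hM.le_of_le hN'𝒮 (hN'L'.trans hL'M)).trans hN'L'

lemma IsMinLeftIdealIn.isClosed (hS : IsPosSubsemigroup S) (hd : DenseNearZero S)
    {L : Set (Ultrafilter ℝ)} (hL : IsMinLeftIdealIn (Oplus S) L) : IsClosed L := by
  obtain ⟨M, hM, hML, hMc⟩ := exists_isMinLeftIdealIn_subset hS hd hL.1
  rwa [hL.2 M hM.1 hML] at hMc

end Oplus

section Images

variable {ι κ : Type} {S : Set ℝ} {A : ι → κ → ℚ}

lemma mem_I0Set_iff_mem_ISet {p : Ultrafilter ℝ} (hp : p ∈ Oplus S) :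
    p ∈ I0Set S A ↔ p ∈ ISet S A := by
  constructor
  · rintro ⟨hSp, h⟩
    refine ⟨hSp, fun P hP => ?_⟩
    obtain ⟨x, hx, hxP⟩ := h P hP 1 one_pos
    exact ⟨x, hx, fun i => (hxP i).1⟩
  · rintro ⟨hSp, h⟩
    refine ⟨hSp, fun P hP ε hε => ?_⟩
    obtain ⟨x, hx, hxP⟩ := h _ (inter_mem hP (hp ε hε))
    exact ⟨x, hx, fun i => ⟨(hxP i).1, (hxP i).2.1⟩⟩

lemma exists_monochromatic_of_mem_ISet {β : Type} [Finite β] {p : Ultrafilter ℝ}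
    (hp : p ∈ ISet S A) {T : Set ℝ} (hT : T ∈ p) (c : ℝ → β) :
    ∃ x : κ → ℝ, (∀ j, x j ∈ S) ∧ ∃ m, ∀ i, mEntry A x i ∈ T ∧ c (mEntry A x i) = m := by
  obtain ⟨m, hm⟩ := Ultrafilter.eq_pure_of_finite (p.map c)
  have hcm : c ⁻¹' {m} ∈ p := Ultrafilter.mem_map.1 (hm ▸ Ultrafilter.mem_pure.2 rfl)
  obtain ⟨x, hx, hxT⟩ := hp.2 _ (inter_mem hT hcm)
  exact ⟨x, hx, m, hxT⟩

lemma ThickNearZero.nonempty {T : Set ℝ} (hT : ThickNearZero S T) : T.Nonempty := by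
  obtain ⟨L, ⟨⟨q, hq⟩, -⟩, hLT⟩ := hT
  exact Ultrafilter.nonempty_of_mem (hLT q hq)

lemma ThickImagePartitionRegular.exists_of_thickNearZero_iUnion
    (ha : ThickImagePartitionRegular S A) {β : Type} [Finite β] {Q : β → Set ℝ}
    (hQ : ThickNearZero S (⋃ b, Q b)) :
    ∃ b, ∃ x : κ → ℝ, (∀ j, x j ∈ S) ∧ ∀ i, mEntry A x i ∈ Q b := by
  obtain ⟨n, ⟨e⟩⟩ := Finite.exists_equiv_fin β
  obtain ⟨b₀, -⟩ := mem_iUnion.1 hQ.nonempty.some_mem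
  have : Nonempty β := ⟨b₀⟩
  obtain ⟨k, rfl⟩ : ∃ k, n = k + 1 := ⟨n - 1, by have := (e b₀).pos; omega⟩
  obtain ⟨x, hx, m, hm⟩ := ha _ hQ k fun s => e (Classical.epsilon fun b => s ∈ Q b)
  refine ⟨e.symm m, x, hx, fun i => ?_⟩
  rw [← (hm i).2, Equiv.symm_apply_apply]
  exact Classical.epsilon_spec (mem_iUnion.1 (hm i).1)

lemma ThickImagePartitionRegular.inter_I0Set_nonempty (ha : ThickImagePartitionRegular S A)
    {L : Set (Ultrafilter ℝ)} (hL : IsLeftIdealIn (Oplus S) L) (hLc : IsClosed L) :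
    (L ∩ I0Set S A).Nonempty := by
  by_contra hempty
  have hbad : ∀ q ∈ L, ∃ Q ∈ q, ∀ x : κ → ℝ, (∀ j, x j ∈ S) → ∃ i, mEntry A x i ∉ Q := by
    intro q hq
    by_contra! h
    have hqI : q ∈ ISet S A := ⟨mem_of_mem_oplus (hL.2.1 hq), h⟩
    exact hempty ⟨q, hq, (mem_I0Set_iff_mem_ISet (hL.2.1 hq)).2 hqI⟩
  choose! Q hQq hQ using hbad
  obtain ⟨B, hBL, hB, hLB⟩ := hLc.isCompact.elim_finite_subcover_image
    (c := fun q => {r : Ultrafilter ℝ | Q q ∈ r}) (fun q _ => ultrafilter_isOpen_basic _)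
    (fun q hq => mem_biUnion hq (hQq q hq))
  have : Finite B := hB
  have hthick : ThickNearZero S (⋃ q : B, Q q) := by
    refine ⟨L, hL, fun r hr => ?_⟩
    obtain ⟨q, hqB, hqr⟩ := mem_iUnion₂.1 (hLB hr)
    exact mem_of_superset hqr (subset_iUnion (fun q : B => Q q) ⟨q, hqB⟩)
  obtain ⟨q, x, hx, hxQ⟩ := ha.exists_of_thickNearZero_iUnion hthick
  obtain ⟨i, hi⟩ := hQ q (hBL q.2) x hx
  exact hi (hxQ i)

end Images

theorem stmt15_general {ι κ : Type}
    (S : Set ℝ) (hS : IsPosSubsemigroup S) (hd : DenseNearZero S)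
    (A : ι → κ → ℚ) :
    ((∀ T : Set ℝ, ThickNearZero S T → ∀ (k : ℕ) (c : ℝ → Fin (k + 1)),
        ∃ x : κ → ℝ, (∀ j, x j ∈ S) ∧ ∃ m : Fin (k + 1),
          ∀ i, mEntry A x i ∈ T ∧ c (mEntry A x i) = m) ↔
      (∀ L, IsMinLeftIdealIn (Oplus S) L → (L ∩ I0Set S A).Nonempty)) ∧
    ((∀ L, IsMinLeftIdealIn (Oplus S) L → (L ∩ I0Set S A).Nonempty) ↔
      (∀ L, IsLeftIdealIn (Oplus S) L → (L ∩ I0Set S A).Nonempty)) := by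
  have hbc : (∀ L, IsMinLeftIdealIn (Oplus S) L → (L ∩ I0Set S A).Nonempty) →
      ∀ L, IsLeftIdealIn (Oplus S) L → (L ∩ I0Set S A).Nonempty := by
    intro hb L hL
    obtain ⟨M, hM, hML, -⟩ := exists_isMinLeftIdealIn_subset hS hd hL
    exact (hb M hM).mono (inter_subset_inter_left _ hML)
  have hba : (∀ L, IsMinLeftIdealIn (Oplus S) L → (L ∩ I0Set S A).Nonempty) →
      ThickImagePartitionRegular S A := by
    rintro hb T ⟨L, hL, hLT⟩ k c
    obtain ⟨p, hpL, hpI⟩ := hbc hb L hL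
    exact exists_monochromatic_of_mem_ISet ((mem_I0Set_iff_mem_ISet (hL.2.1 hpL)).1 hpI)
      (hLT p hpL) c
  exact ⟨⟨fun ha L hL => ThickImagePartitionRegular.inter_I0Set_nonempty ha hL.1
    (hL.isClosed hS hd), hba⟩, ⟨hbc, fun hc L hL => hc L hL.1⟩⟩

/-- For an admissible matrix `A`, the following are equivalent:
(a) every finite coloring of every thick-near-zero set contains a monochromatic image
of `A`; (b) every minimal left ideal of `O⁺(S)` meets `I₀(A;S)`; (c) every left ideal
of `O⁺(S)` meets `I₀(A;S)`. -/
theorem stmt15 {ι κ : Type} [Countable ι] [Countable κ] [Nonempty ι] [Nonempty κ]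
    (S : Set ℝ) (hS : IsPosSubsemigroup S) (hd : DenseNearZero S)
    (A : ι → κ → ℚ) (hA : Admissible A) :
    ((∀ T : Set ℝ, ThickNearZero S T → ∀ (k : ℕ) (c : ℝ → Fin (k + 1)),
        ∃ x : κ → ℝ, (∀ j, x j ∈ S) ∧ ∃ m : Fin (k + 1),
          ∀ i, mEntry A x i ∈ T ∧ c (mEntry A x i) = m) ↔
      (∀ L, IsMinLeftIdealIn (Oplus S) L → (L ∩ I0Set S A).Nonempty)) ∧
    ((∀ L, IsMinLeftIdealIn (Oplus S) L → (L ∩ I0Set S A).Nonempty) ↔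
      (∀ L, IsLeftIdealIn (Oplus S) L → (L ∩ I0Set S A).Nonempty)) :=
  stmt15_general S hS hd A
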